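/- For every integer n ≥ 1 there exists a finite constant C_n such that for all ε ∈ [0,1], the determinant of the n×n matrix with (i,j) entry q_2(ε·n̲_i, ε·n̲_j) is at most C_n · ε^{2n²}. -/
import Mathlib


/-- `gauss v z` is the one-dimensional centered Gaussian density of variance `v` at `z`. -/
noncomputable def gauss (v z : ℝ) : ℝ :=
  (Real.sqrt (2 * Real.pi * v))⁻¹ * Real.exp (-z ^ 2 / (2 * v))

/-- `q t x y` is the transition kernel of Brownian motion killed at `0`. -/
noncomputable def q (t x y : ℝ) : ℝ := gauss t (y - x) - gauss t (y + x)

/-- `nvec n i = 2(n-1-i)+1`, i.e. the vector `(2n-1, 2n-3, …, 3, 1)` (0-based index). -/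
def nvec (n : ℕ) (i : Fin n) : ℝ := ((2 * (n - 1 - (i : ℕ)) + 1 : ℕ) : ℝ)

section AuxStmt8
open Nat Finset

/-- Sum of `m` distinct naturals is at least `0+1+...+(m-1)`. -/
lemma aux_sum_distinct : ∀ (m : ℕ) (T : Finset ℕ), T.card = m →
    (∑ i ∈ Finset.range m, i) ≤ ∑ k ∈ T, k := by
  intro m
  induction m with
  | zero => simp
  | succ m ih =>
    intro T hT
    have hne : T.Nonempty := Finset.card_pos.mp (by omega)
    have hMT : T.max' hne ∈ T := T.max'_mem hne
    have hcard : (T.erase (T.max' hne)).card = m := by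
      rw [Finset.card_erase_of_mem hMT, hT]; omega
    have hsub : T ⊆ Finset.range (T.max' hne + 1) := fun k hk =>
      Finset.mem_range.mpr (Nat.lt_succ_of_le (T.le_max' k hk))
    have hM : m ≤ T.max' hne := by
      have := Finset.card_le_card hsub
      rw [hT, Finset.card_range] at this; omega
    calc ∑ i ∈ Finset.range (m+1), i = (∑ i ∈ Finset.range m, i) + m :=
          Finset.sum_range_succ _ _
      _ ≤ (∑ k ∈ T.erase (T.max' hne), k) + T.max' hne := _root_.add_le_add (ih _ hcard) hM
      _ = ∑ k ∈ T, k := Finset.sum_erase_add _ _ hMT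

/-- Exponent lower bound for admissible index functions. -/
lemma aux_exponent (n : ℕ) (r : Fin n → ℕ) (hle : ∀ i, r i ≤ n)
    (hinj : ∀ i i', r i < n → r i' < n → r i = r i' → i = i') :
    2 * n ^ 2 ≤ ∑ i, (4 * r i + 2) := by
  classical
  set S : Finset (Fin n) := Finset.univ.filter (fun i => r i < n) with hS
  set m := S.card with hm
  have hmn : m ≤ n := by
    calc m ≤ (Finset.univ : Finset (Fin n)).card := Finset.card_le_card (Finset.filter_subset _ _)
      _ = n := by simp
  -- sum over S
  have hinjS : Set.InjOn r S := by
    intro i hi i' hi' h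
    simp only [hS, Finset.coe_filter, Set.mem_setOf_eq, Finset.mem_univ, true_and] at hi hi'
    exact hinj i i' hi hi' h
  have himg : (S.image r).card = m := Finset.card_image_of_injOn hinjS
  have hsumS : (∑ i ∈ Finset.range m, i) ≤ ∑ i ∈ S, r i := by
    have := aux_sum_distinct (S.image r).card (S.image r) rfl
    rw [himg] at this
    calc (∑ i ∈ Finset.range m, i) ≤ ∑ k ∈ S.image r, k := this
      _ = ∑ i ∈ S, r i := Finset.sum_image fun x hx y hy h => hinjS (by simpa using hx) (by simpa using hy) h
  have hgauss : (∑ i ∈ Finset.range m, i) * 2 = m * (m - 1) := Finset.sum_range_id_mul_two m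
  -- sum over complement
  have hcomp : ∑ i ∈ Finset.univ.filter (fun i => ¬ r i < n), r i
      = (Finset.univ.filter (fun i => ¬ r i < n)).card * n := by
    rw [Finset.sum_congr rfl (fun i hi => ?_), Finset.sum_const, smul_eq_mul]
    have h2 : ¬ r i < n := (Finset.mem_filter.mp hi).2
    have h3 := hle i
    omega
  have hcards : m + (Finset.univ.filter (fun i => ¬ r i < n)).card = n := by
    rw [hm, hS]
    rw [Finset.card_filter_add_card_filter_not]
    simp
  have hsplit : ∑ i, r i = (∑ i ∈ S, r i) + ∑ i ∈ Finset.univ.filter (fun i => ¬ r i < n), r i := by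
    rw [hS]
    exact (Finset.sum_filter_add_sum_filter_not _ _ _).symm
  have htot : ∑ i, (4 * r i + 2) = 4 * (∑ i, r i) + 2 * n := by
    rw [Finset.sum_add_distrib, Finset.sum_const, ← Finset.mul_sum]
    simp [mul_comm]
  rw [htot, hsplit, hcomp]
  set c := (Finset.univ.filter (fun i => ¬ r i < n)).card
  -- now pure arithmetic: m + c = n, 2*∑S ≥ m*(m-1)
  have h2 : m * m ≤ 2 * (∑ i ∈ S, r i) + m := by
    have hmm : m * (m - 1) + m = m * m := by cases m with
      | zero => simp
      | succ k => simp [Nat.succ_sub_one]; ring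
    omega
  have e1 : n * n = (m + c) * (m + c) := by rw [hcards]
  have e2 : c * n = c * (m + c) := by rw [hcards]
  nlinarith [h2, e1, e2]

/-- Tail of the sinh power series. -/
noncomputable def sinhTail (n : ℕ) (u : ℝ) : ℝ :=
  Real.sinh u - ∑ k ∈ Finset.range n, u ^ (2 * k + 1) / (2 * k + 1)!

lemma sinhTail_eq (n : ℕ) (u : ℝ) :
    sinhTail n u = ∑' k : ℕ, u ^ (2 * (k + n) + 1) / (2 * (k + n) + 1)! := by
  have hs : Summable (fun k : ℕ => u ^ (2 * k + 1) / ((2 * k + 1)! : ℝ)) :=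
    (Real.hasSum_sinh u).summable
  have h := Summable.sum_add_tsum_nat_add (f := fun k : ℕ => u ^ (2 * k + 1) / ((2 * k + 1)! : ℝ)) n hs
  rw [(Real.hasSum_sinh u).tsum_eq] at h
  rw [sinhTail, ← h]
  ring

lemma sinhTail_summable (n : ℕ) (u : ℝ) :
    Summable (fun k : ℕ => u ^ (2 * (k + n) + 1) / ((2 * (k + n) + 1)! : ℝ)) :=
  (summable_nat_add_iff n).mpr (Real.hasSum_sinh u).summable

lemma sinhTail_nonneg (n : ℕ) {u : ℝ} (hu : 0 ≤ u) : 0 ≤ sinhTail n u := by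
  rw [sinhTail_eq]
  exact tsum_nonneg fun k => by positivity

lemma sinhTail_le (n : ℕ) {u U : ℝ} (hu : 0 ≤ u) (hU : u ≤ U) :
    sinhTail n u ≤ u ^ (2 * n + 1) * Real.cosh U := by
  rw [sinhTail_eq]
  have hs1 := sinhTail_summable n u
  have hs2 : Summable (fun k : ℕ => u ^ (2 * n + 1) * (U ^ (2 * k) / ((2 * k)! : ℝ))) :=
    ((Real.hasSum_cosh U).summable).mul_left _
  have hterm : ∀ k : ℕ, u ^ (2 * (k + n) + 1) / ((2 * (k + n) + 1)! : ℝ)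
      ≤ u ^ (2 * n + 1) * (U ^ (2 * k) / ((2 * k)! : ℝ)) := by
    intro k
    have hpow : u ^ (2 * (k + n) + 1) = u ^ (2 * n + 1) * u ^ (2 * k) := by
      rw [← pow_add]; congr 1; ring
    rw [hpow, mul_div_assoc]
    refine mul_le_mul_of_nonneg_left ?_ (by positivity)
    refine div_le_div₀ (pow_nonneg (hu.trans hU) _) (pow_le_pow_left₀ hu hU _) (by positivity) ?_
    exact_mod_cast Nat.factorial_le (by omega)
  calc (∑' k : ℕ, u ^ (2 * (k + n) + 1) / ((2 * (k + n) + 1)! : ℝ))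
      ≤ ∑' k : ℕ, u ^ (2 * n + 1) * (U ^ (2 * k) / ((2 * k)! : ℝ)) :=
        Summable.tsum_le_tsum hterm hs1 hs2
    _ = u ^ (2 * n + 1) * Real.cosh U := by
        rw [tsum_mul_left, (Real.hasSum_cosh U).tsum_eq]


/-- The kernel at time 2 factorizes through `sinh`. -/
lemma q_two_eq (x y : ℝ) : q 2 x y =
    (Real.sqrt (2 * Real.pi * 2))⁻¹ * Real.exp (-x ^ 2 / 4) *
      (Real.exp (-y ^ 2 / 4) * (2 * Real.sinh (x * y / 2))) := by
  have h1 : Real.exp (-x ^ 2 / 4) * (Real.exp (-y ^ 2 / 4) * Real.exp (x * y / 2))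
      = Real.exp (-(y - x) ^ 2 / (2 * 2)) := by
    rw [← Real.exp_add, ← Real.exp_add]; congr 1; ring
  have h2 : Real.exp (-x ^ 2 / 4) * (Real.exp (-y ^ 2 / 4) * Real.exp (-(x * y / 2)))
      = Real.exp (-(y + x) ^ 2 / (2 * 2)) := by
    rw [← Real.exp_add, ← Real.exp_add]; congr 1; ring
  unfold q gauss
  rw [Real.sinh_eq, ← h1, ← h2]
  ring

lemma core_det_bound (n : ℕ) (A : ℝ) (hA : 1 ≤ A) (a : Fin n → ℝ)
    (ha1 : ∀ i, 1 ≤ a i) (haA : ∀ i, a i ≤ A) :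
    ∃ K : ℝ, ∀ ε : ℝ, 0 < ε → ε ≤ 1 →
      |Matrix.det (Matrix.of fun i j => 2 * Real.sinh ((ε * a i) * (ε * a j) / 2))| ≤
        K * ε ^ (2 * n ^ 2) := by
  classical
  have hA0 : (0:ℝ) < A := lt_of_lt_of_le one_pos hA
  set Brem : ℝ := 2 * ((A * A) ^ (2 * n + 1) * Real.cosh (A * A)) with hBrem
  set Ds : ℝ := A ^ (2 * n - 1) + 1 with hDs
  set Bp : ℝ := A ^ (2 * n - 1) + Brem with hBp
  have hBrem0 : 0 ≤ Brem := by
    have := (Real.cosh_pos (x := A * A)).le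
    positivity
  have hDs0 : (0:ℝ) ≤ Ds := by positivity
  have hBp0 : (0:ℝ) ≤ Bp := by positivity
  refine ⟨((Fintype.piFinset fun _ : Fin n => Finset.range (n + 1)).card : ℝ) *
    (Ds ^ n * ((n.factorial : ℝ) * Bp ^ n)), ?_⟩
  intro ε hε0 hε1
  set cst : ℕ → ℝ := fun k => 2 / (((2 * k + 1)! : ℝ) * 2 ^ (2 * k + 1)) with hcstdef
  have hcst0 : ∀ k, 0 ≤ cst k := by
    intro k
    have : (0:ℝ) < ((2 * k + 1)! : ℝ) := by exact_mod_cast Nat.factorial_pos _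
    positivity
  have hcst1 : ∀ k, cst k ≤ 1 := by
    intro k
    have hf : (1:ℝ) ≤ ((2 * k + 1)! : ℝ) := by exact_mod_cast (Nat.factorial_pos _)
    have hp : (2:ℝ) ≤ 2 ^ (2 * k + 1) := by
      calc (2:ℝ) = 2 ^ 1 := (pow_one 2).symm
        _ ≤ 2 ^ (2 * k + 1) := pow_le_pow_right₀ one_le_two (by omega)
    rw [hcstdef, div_le_one (by positivity)]
    calc (2:ℝ) = 1 * 2 := (one_mul 2).symm
      _ ≤ ((2 * k + 1)! : ℝ) * 2 ^ (2 * k + 1) := mul_le_mul hf hp (by norm_num) (by positivity)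
  set G : ℕ → Fin n → Fin n → ℝ := fun k i j =>
    if k < n then cst k * ((ε * a i) * (ε * a j)) ^ (2 * k + 1)
    else 2 * sinhTail n ((ε * a i) * (ε * a j) / 2) with hGdef
  -- decomposition of the matrix entries
  have hdecomp : ∀ i j, (2:ℝ) * Real.sinh ((ε * a i) * (ε * a j) / 2)
      = ∑ k ∈ Finset.range (n + 1), G k i j := by
    intro i j
    rw [Finset.sum_range_succ]
    have hlast : G n i j = 2 * sinhTail n ((ε * a i) * (ε * a j) / 2) := by
      simp [hGdef]
    have hsmall : ∀ k ∈ Finset.range n, G k i j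
        = 2 * (((ε * a i) * (ε * a j) / 2) ^ (2 * k + 1) / ((2 * k + 1)! : ℝ)) := by
      intro k hk
      have hk' : k < n := Finset.mem_range.mp hk
      simp only [hGdef, if_pos hk', hcstdef]
      have hf : ((2 * k + 1)! : ℝ) ≠ 0 := by exact_mod_cast (Nat.factorial_pos _).ne'
      have h2 : ((2:ℝ) ^ (2 * k + 1)) ≠ 0 := by positivity
      rw [div_pow]
      ring
    rw [Finset.sum_congr rfl hsmall, hlast, sinhTail, mul_sub, ← Finset.mul_sum]
    ring
  -- expansion of the determinant
  have hdet0 : Matrix.det (Matrix.of fun i j => 2 * Real.sinh ((ε * a i) * (ε * a j) / 2))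
      = ∑ r ∈ Fintype.piFinset (fun _ : Fin n => Finset.range (n + 1)),
          Matrix.det (Matrix.of fun i j => G (r i) i j) := by
    have hrows : (Matrix.of fun i j => 2 * Real.sinh ((ε * a i) * (ε * a j) / 2))
        = fun i => ∑ k ∈ Finset.range (n + 1), (fun j => G k i j) := by
      funext i j
      simp only [Matrix.of_apply, Finset.sum_apply]
      exact hdecomp i j
    have hml := MultilinearMap.map_sum_finset
      (f := (Matrix.detRowAlternating (R := ℝ) (n := Fin n)).toMultilinearMap)
      (g := fun i k => fun j => G k i j) (A := fun _ : Fin n => Finset.range (n + 1))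
    calc Matrix.det (Matrix.of fun i j => 2 * Real.sinh ((ε * a i) * (ε * a j) / 2))
        = (Matrix.detRowAlternating (R := ℝ) (n := Fin n)).toMultilinearMap
            (fun i => ∑ k ∈ Finset.range (n + 1), (fun j => G k i j)) := by rw [← hrows]; rfl
      _ = ∑ r ∈ Fintype.piFinset (fun _ : Fin n => Finset.range (n + 1)),
            Matrix.det (Matrix.of fun i j => G (r i) i j) := by rw [hml]; rfl
  -- per-term bound
  have hbound : ∀ r ∈ Fintype.piFinset (fun _ : Fin n => Finset.range (n + 1)),
      |Matrix.det (Matrix.of fun i j => G (r i) i j)|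
        ≤ Ds ^ n * ((n.factorial : ℝ) * Bp ^ n) * ε ^ (2 * n ^ 2) := by
    intro r hr
    have hrle : ∀ i, r i ≤ n := by
      intro i
      have := Fintype.mem_piFinset.mp hr i
      have := Finset.mem_range.mp this
      omega
    set s : Fin n → ℝ := fun i =>
      if r i < n then cst (r i) * ε ^ (4 * r i + 2) * (a i) ^ (2 * r i + 1)
      else ε ^ (4 * n + 2) with hsdef
    set P : Fin n → Fin n → ℝ := fun i j =>
      if r i < n then (a j) ^ (2 * r i + 1)
      else (2 * sinhTail n ((ε * a i) * (ε * a j) / 2)) / ε ^ (4 * n + 2) with hPdef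
    have hfact : ∀ i j, G (r i) i j = s i * P i j := by
      intro i j
      by_cases h : r i < n
      · simp only [hGdef, hsdef, hPdef, if_pos h]
        have hX : ((ε * a i) * (ε * a j)) ^ (2 * r i + 1)
            = ε ^ (4 * r i + 2) * ((a i) ^ (2 * r i + 1) * (a j) ^ (2 * r i + 1)) := by
          rw [mul_pow, mul_pow, mul_pow,
            show 4 * r i + 2 = (2 * r i + 1) + (2 * r i + 1) by ring, pow_add]
          ring
        rw [hX]; ring
      · simp only [hGdef, hsdef, hPdef, if_neg h]
        rw [mul_comm (ε ^ (4 * n + 2)) _,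
          div_mul_cancel₀ _ (by positivity : (ε:ℝ) ^ (4 * n + 2) ≠ 0)]
    have hdet : Matrix.det (Matrix.of fun i j => G (r i) i j)
        = (∏ i, s i) * Matrix.det (Matrix.of P) := by
      rw [show (Matrix.of fun i j => G (r i) i j)
          = Matrix.of fun i j => s i * (Matrix.of P) i j from by
        ext i j; exact hfact i j]
      exact Matrix.det_mul_column s _
    by_cases hdup : ∃ i i', i ≠ i' ∧ r i = r i' ∧ r i < n
    · obtain ⟨i, i', hne, heq, hlt⟩ := hdup
      have hlt' : r i' < n := heq ▸ hlt
      have hrow : (Matrix.of P) i = (Matrix.of P) i' := by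
        funext j
        simp only [Matrix.of_apply, hPdef, if_pos hlt, if_pos hlt', heq]
      rw [hdet, Matrix.det_zero_of_row_eq hne hrow, mul_zero, abs_zero]
      positivity
    · push_neg at hdup
      have hinj : ∀ i i', r i < n → r i' < n → r i = r i' → i = i' := by
        intro i i' h1 h2 h3
        by_contra hne
        exact absurd (hdup i i' hne h3) (not_le.mpr h1)
      -- entrywise bound on P
      have hPle : ∀ i j, |(Matrix.of P) i j| ≤ Bp := by
        intro i j
        simp only [Matrix.of_apply, hPdef]
        by_cases h : r i < n
        · have h1 : (0:ℝ) ≤ a j := le_trans zero_le_one (ha1 j)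
          rw [if_pos h, abs_of_nonneg (pow_nonneg h1 _)]
          calc (a j) ^ (2 * r i + 1) ≤ A ^ (2 * r i + 1) := pow_le_pow_left₀ h1 (haA j) _
            _ ≤ A ^ (2 * n - 1) := pow_le_pow_right₀ hA (by omega)
            _ ≤ Bp := le_add_of_nonneg_right hBrem0
        · rw [if_neg h]
          have hu0 : (0:ℝ) ≤ (ε * a i) * (ε * a j) / 2 := by
            have := (ha1 i).trans' zero_le_one
            have := (ha1 j).trans' zero_le_one
            positivity
          have hεa : ∀ m, ε * a m ≤ A := fun m =>
            calc ε * a m ≤ 1 * a m := mul_le_mul_of_nonneg_right hε1 ((ha1 m).trans' zero_le_one)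
              _ = a m := one_mul _
              _ ≤ A := haA m
          have huU : (ε * a i) * (ε * a j) / 2 ≤ A * A := by
            have h1 : (0:ℝ) ≤ ε * a i := mul_nonneg hε0.le ((ha1 i).trans' zero_le_one)
            have h2 : (ε * a i) * (ε * a j) ≤ A * A :=
              mul_le_mul (hεa i) (hεa j) (mul_nonneg hε0.le ((ha1 j).trans' zero_le_one)) hA0.le
            nlinarith [h2, mul_nonneg h1 (mul_nonneg hε0.le ((ha1 j).trans' zero_le_one))]
          have htail := sinhTail_le n hu0 huU
          have htail0 := sinhTail_nonneg n hu0
          have hupow : ((ε * a i) * (ε * a j) / 2) ^ (2 * n + 1)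
              ≤ ε ^ (4 * n + 2) * (A * A) ^ (2 * n + 1) := by
            have hstep : (ε * a i) * (ε * a j) / 2 ≤ ε ^ 2 * (A * A) := by
              have h2 : (ε * a i) * (ε * a j) ≤ (ε * A) * (ε * A) := by
                have hai : ε * a i ≤ ε * A := mul_le_mul_of_nonneg_left (haA i) hε0.le
                have haj : ε * a j ≤ ε * A := mul_le_mul_of_nonneg_left (haA j) hε0.le
                exact mul_le_mul hai haj
                  (mul_nonneg hε0.le ((ha1 j).trans' zero_le_one))
                  (mul_nonneg hε0.le hA0.le)
              nlinarith [h2]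
            calc ((ε * a i) * (ε * a j) / 2) ^ (2 * n + 1)
                ≤ (ε ^ 2 * (A * A)) ^ (2 * n + 1) := pow_le_pow_left₀ hu0 hstep _
              _ = ε ^ (4 * n + 2) * (A * A) ^ (2 * n + 1) := by
                  rw [mul_pow, ← pow_mul]
                  congr 2
                  omega
          rw [abs_of_nonneg (by positivity)]
          have hcoshpos := (Real.cosh_pos (x := A * A)).le
          have : 2 * sinhTail n ((ε * a i) * (ε * a j) / 2)
              ≤ ε ^ (4 * n + 2) * Brem := by
            calc 2 * sinhTail n ((ε * a i) * (ε * a j) / 2)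
                ≤ 2 * (((ε * a i) * (ε * a j) / 2) ^ (2 * n + 1) * Real.cosh (A * A)) := by
                  linarith [htail]
              _ ≤ 2 * ((ε ^ (4 * n + 2) * (A * A) ^ (2 * n + 1)) * Real.cosh (A * A)) := by
                  have := mul_le_mul_of_nonneg_right hupow hcoshpos
                  linarith [this]
              _ = ε ^ (4 * n + 2) * Brem := by rw [hBrem]; ring
          rw [div_le_iff₀ (by positivity)]
          calc 2 * sinhTail n ((ε * a i) * (ε * a j) / 2)
              ≤ ε ^ (4 * n + 2) * Brem := this
            _ ≤ ε ^ (4 * n + 2) * Bp := by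
                refine mul_le_mul_of_nonneg_left ?_ (by positivity)
                rw [hBp]
                exact le_add_of_nonneg_left (by positivity)
            _ = Bp * ε ^ (4 * n + 2) := mul_comm _ _
      -- det P bound
      have hdetP : |Matrix.det (Matrix.of P)| ≤ (n.factorial : ℝ) * Bp ^ n := by
        have := Matrix.det_le (A := Matrix.of P) (abv := AbsoluteValue.abs (S := ℝ))
          (x := Bp) (fun i j => by simpa using hPle i j)
        simpa [Fintype.card_fin, nsmul_eq_mul] using this
      -- product of scalars bound
      have hsle : ∀ i, |s i| ≤ ε ^ (4 * r i + 2) * Ds := by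
        intro i
        by_cases h : r i < n
        · simp only [hsdef, if_pos h]
          have ha0 : (0:ℝ) ≤ a i := (ha1 i).trans' zero_le_one
          rw [abs_of_nonneg (by positivity)]
          calc cst (r i) * ε ^ (4 * r i + 2) * (a i) ^ (2 * r i + 1)
              ≤ 1 * ε ^ (4 * r i + 2) * (a i) ^ (2 * r i + 1) := by
                refine mul_le_mul_of_nonneg_right
                  (mul_le_mul_of_nonneg_right (hcst1 _) (by positivity)) (by positivity)
            _ = ε ^ (4 * r i + 2) * (a i) ^ (2 * r i + 1) := by ring
            _ ≤ ε ^ (4 * r i + 2) * A ^ (2 * n - 1) := by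
                refine mul_le_mul_of_nonneg_left ?_ (by positivity)
                calc (a i) ^ (2 * r i + 1) ≤ A ^ (2 * r i + 1) := pow_le_pow_left₀ ha0 (haA i) _
                  _ ≤ A ^ (2 * n - 1) := pow_le_pow_right₀ hA (by omega)
            _ ≤ ε ^ (4 * r i + 2) * Ds := by
                refine mul_le_mul_of_nonneg_left ?_ (by positivity)
                rw [hDs]; linarith
        · simp only [hsdef, if_neg h]
          have hrn : r i = n := le_antisymm (hrle i) (not_lt.mp h)
          rw [abs_of_nonneg (by positivity), hrn]
          have : (1:ℝ) ≤ Ds := by rw [hDs]; exact le_add_of_nonneg_left (by positivity)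
          calc ε ^ (4 * n + 2) = ε ^ (4 * n + 2) * 1 := (mul_one _).symm
            _ ≤ ε ^ (4 * n + 2) * Ds := mul_le_mul_of_nonneg_left this (by positivity)
      have hprod : |∏ i, s i| ≤ ε ^ (2 * n ^ 2) * Ds ^ n := by
        rw [Finset.abs_prod]
        calc ∏ i, |s i| ≤ ∏ i : Fin n, (ε ^ (4 * r i + 2) * Ds) :=
              Finset.prod_le_prod (fun i _ => abs_nonneg _) (fun i _ => hsle i)
          _ = (∏ i : Fin n, ε ^ (4 * r i + 2)) * Ds ^ n := by
              rw [Finset.prod_mul_distrib, Finset.prod_const, Finset.card_univ, Fintype.card_fin]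
          _ = ε ^ (∑ i, (4 * r i + 2)) * Ds ^ n := by
              rw [Finset.prod_pow_eq_pow_sum]
          _ ≤ ε ^ (2 * n ^ 2) * Ds ^ n := by
              refine mul_le_mul_of_nonneg_right ?_ (by positivity)
              exact pow_le_pow_of_le_one hε0.le hε1 (aux_exponent n r hrle hinj)
      rw [hdet, abs_mul]
      calc |∏ i, s i| * |Matrix.det (Matrix.of P)|
          ≤ (ε ^ (2 * n ^ 2) * Ds ^ n) * ((n.factorial : ℝ) * Bp ^ n) :=
            mul_le_mul hprod hdetP (abs_nonneg _) (by positivity)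
        _ = Ds ^ n * ((n.factorial : ℝ) * Bp ^ n) * ε ^ (2 * n ^ 2) := by ring
  -- sum up
  rw [hdet0]
  calc |∑ r ∈ Fintype.piFinset (fun _ : Fin n => Finset.range (n + 1)),
        Matrix.det (Matrix.of fun i j => G (r i) i j)|
      ≤ ∑ r ∈ Fintype.piFinset (fun _ : Fin n => Finset.range (n + 1)),
        |Matrix.det (Matrix.of fun i j => G (r i) i j)| := Finset.abs_sum_le_sum_abs _ _
    _ ≤ ∑ _r ∈ Fintype.piFinset (fun _ : Fin n => Finset.range (n + 1)),
        Ds ^ n * ((n.factorial : ℝ) * Bp ^ n) * ε ^ (2 * n ^ 2) :=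
        Finset.sum_le_sum hbound
    _ = ((Fintype.piFinset fun _ : Fin n => Finset.range (n + 1)).card : ℝ) *
        (Ds ^ n * ((n.factorial : ℝ) * Bp ^ n)) * ε ^ (2 * n ^ 2) := by
        rw [Finset.sum_const, nsmul_eq_mul]; ring


end AuxStmt8

/-- The Karlin–McGregor return density at time `2` from `ε • n̲` decays like `ε^(2n²)`. -/
theorem stmt8 (n : ℕ) (hn : 1 ≤ n) :
    ∃ C : ℝ, ∀ ε ∈ Set.Icc (0 : ℝ) 1,
      Matrix.det (Matrix.of fun i j : Fin n => q 2 (ε * nvec n i) (ε * nvec n j)) ≤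
        C * ε ^ (2 * n ^ 2) := by
  classical
  set a : Fin n → ℝ := nvec n with ha
  have ha1 : ∀ i, 1 ≤ a i := fun i => by
    rw [ha, nvec]; exact_mod_cast Nat.one_le_iff_ne_zero.mpr (by omega)
  have haA : ∀ i, a i ≤ ((2 * n - 1 : ℕ) : ℝ) := fun i => by
    rw [ha, nvec]; exact_mod_cast (by omega : 2 * (n - 1 - (i : ℕ)) + 1 ≤ 2 * n - 1)
  have hA : (1:ℝ) ≤ ((2 * n - 1 : ℕ) : ℝ) := by exact_mod_cast (by omega : 1 ≤ 2 * n - 1)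
  obtain ⟨K, hK⟩ := core_det_bound n _ hA a ha1 haA
  refine ⟨K, ?_⟩
  rintro ε ⟨hε0, hε1⟩
  rcases eq_or_lt_of_le hε0 with h0 | h0
  · -- ε = 0
    have hdet : Matrix.det (Matrix.of fun i j : Fin n => q 2 (ε * a i) (ε * a j)) = 0 := by
      apply Matrix.det_eq_zero_of_row_eq_zero (⟨0, hn⟩ : Fin n)
      intro j
      simp only [Matrix.of_apply, ← h0, zero_mul]
      simp [q]
    rw [hdet, ← h0]
    rw [zero_pow (by positivity : 2 * n ^ 2 ≠ 0), mul_zero]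
  · -- ε > 0
    have key := hK ε h0 hε1
    set v : Fin n → ℝ := fun i => (Real.sqrt (2 * Real.pi * 2))⁻¹ *
      Real.exp (-(ε * a i) ^ 2 / 4) with hv
    set w : Fin n → ℝ := fun j => Real.exp (-(ε * a j) ^ 2 / 4) with hw
    have hsqrt : (1:ℝ) ≤ Real.sqrt (2 * Real.pi * 2) := by
      rw [show (1:ℝ) = Real.sqrt 1 by rw [Real.sqrt_one]]
      exact Real.sqrt_le_sqrt (by nlinarith [Real.pi_gt_three])
    have hv0 : ∀ i, 0 ≤ v i := fun i => by
      rw [hv]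
      have : (0:ℝ) < Real.sqrt (2 * Real.pi * 2) := lt_of_lt_of_le one_pos hsqrt
      positivity
    have hv1 : ∀ i, v i ≤ 1 := fun i => by
      rw [hv]
      calc (Real.sqrt (2 * Real.pi * 2))⁻¹ * Real.exp (-(ε * a i) ^ 2 / 4)
          ≤ 1 * 1 := mul_le_mul (inv_le_one_of_one_le₀ hsqrt)
            (Real.exp_le_one_iff.mpr (by nlinarith [sq_nonneg (ε * a i)]))
            (Real.exp_pos _).le zero_le_one
        _ = 1 := one_mul 1
    have hw0 : ∀ j, 0 ≤ w j := fun j => (Real.exp_pos _).le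
    have hw1 : ∀ j, w j ≤ 1 := fun j =>
      Real.exp_le_one_iff.mpr (by nlinarith [sq_nonneg (ε * a j)])
    have hfac : Matrix.det (Matrix.of fun i j : Fin n => q 2 (ε * a i) (ε * a j))
        = (∏ i, v i) * ((∏ j, w j) * Matrix.det
            (Matrix.of fun i j => 2 * Real.sinh ((ε * a i) * (ε * a j) / 2))) := by
      have hE : (Matrix.of fun i j : Fin n => q 2 (ε * a i) (ε * a j))
          = Matrix.of fun i j => v i *
              ((Matrix.of fun i j : Fin n => w j *
                ((Matrix.of fun i j : Fin n =>
                  2 * Real.sinh ((ε * a i) * (ε * a j) / 2)) i j)) i j) := by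
        ext i j
        simp only [Matrix.of_apply, hv, hw]
        exact q_two_eq (ε * a i) (ε * a j)
      rw [hE, Matrix.det_mul_column, Matrix.det_mul_row]
    have habs : Matrix.det (Matrix.of fun i j : Fin n => q 2 (ε * a i) (ε * a j))
        ≤ |Matrix.det (Matrix.of fun i j : Fin n =>
            2 * Real.sinh ((ε * a i) * (ε * a j) / 2))| := by
      rw [hfac]
      have hpv : 0 ≤ ∏ i, v i := Finset.prod_nonneg fun i _ => hv0 i
      have hpw : 0 ≤ ∏ j, w j := Finset.prod_nonneg fun j _ => hw0 j
      have hpv1 : (∏ i, v i) ≤ 1 := Finset.prod_le_one (fun i _ => hv0 i) (fun i _ => hv1 i)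
      have hpw1 : (∏ j, w j) ≤ 1 := Finset.prod_le_one (fun j _ => hw0 j) (fun j _ => hw1 j)
      set D := Matrix.det (Matrix.of fun i j : Fin n =>
        2 * Real.sinh ((ε * a i) * (ε * a j) / 2))
      calc (∏ i, v i) * ((∏ j, w j) * D)
          ≤ (∏ i, v i) * ((∏ j, w j) * |D|) := by
            refine mul_le_mul_of_nonneg_left
              (mul_le_mul_of_nonneg_left (le_abs_self D) hpw) hpv
        _ ≤ 1 * (1 * |D|) := by
            refine mul_le_mul hpv1 ?_ (by positivity) zero_le_one
            exact mul_le_mul hpw1 le_rfl (abs_nonneg _) zero_le_one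
        _ = |D| := by ring
    exact habs.trans key
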